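/- With c₁ = (1,-1,0,0), the cone σ₁₅ = cone(e₁,d₁,d₃,d₄) equals the union cone(c₁,d₁,d₃,d₄) ∪ cone(e₁,d₁,c₁,d₄) ∪ cone(e₁,d₁,d₃,c₁), and each of these three cones has generator matrix (columns in the listed order) of determinant 1. -/
import Mathlib

open Matrix

noncomputable section

def e1 : Fin 4 → ℝ := ![1, 0, 0, 0]
def e2 : Fin 4 → ℝ := ![0, 1, 0, 0]
def e3 : Fin 4 → ℝ := ![0, 0, 1, 0]
def e4 : Fin 4 → ℝ := ![0, 0, 0, 1]
def d1 : Fin 4 → ℝ := ![-1, 0, -2, 1]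
def d2 : Fin 4 → ℝ := ![-2, -1, 0, 1]
def d3 : Fin 4 → ℝ := ![0, -2, -1, 1]
def d4 : Fin 4 → ℝ := ![1, 0, 1, -1]
def c1 : Fin 4 → ℝ := ![1, -1, 0, 0]

/-- The cone generated by four vectors: all nonnegative linear combinations. -/
def cone4 (v1 v2 v3 v4 : Fin 4 → ℝ) : Set (Fin 4 → ℝ) :=
  {x | ∃ a b c d : ℝ, 0 ≤ a ∧ 0 ≤ b ∧ 0 ≤ c ∧ 0 ≤ d ∧
    x = a • v1 + b • v2 + c • v3 + d • v4}

/-- The 4×4 matrix whose columns are `v1, v2, v3, v4` (in this order). -/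
def colMat (v1 v2 v3 v4 : Fin 4 → ℝ) : Matrix (Fin 4) (Fin 4) ℝ :=
  (Matrix.of ![v1, v2, v3, v4])ᵀ

theorem subdivision_of_sigma15 :
    cone4 e1 d1 d3 d4 =
      cone4 c1 d1 d3 d4 ∪
      cone4 e1 d1 c1 d4 ∪
      cone4 e1 d1 d3 c1 ∧
    (colMat c1 d1 d3 d4).det = 1 ∧
    (colMat e1 d1 c1 d4).det = 1 ∧
    (colMat e1 d1 d3 c1).det = 1 := by
  refine ⟨?_, ?_, ?_, ?_⟩
  · ext x
    constructor
    · rintro ⟨a, b, c, d, ha, hb, hc, hd, rfl⟩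
      rcases le_total a c with hac | hac
      · rcases le_total a d with had | had
        · -- min is a : cone A
          exact Or.inl <| Or.inl ⟨2*a, b, c-a, d-a, by linarith, hb, by linarith, by linarith,
            by funext i; fin_cases i <;> simp [e1, d1, d3, d4, c1] <;> ring⟩
        · -- d ≤ a ≤ c : cone C
          exact Or.inr ⟨a-d, b, c-d, 2*d, by linarith, hb, by linarith, by linarith,
            by funext i; fin_cases i <;> simp [e1, d1, d3, d4, c1] <;> ring⟩
      · rcases le_total c d with hcd | hcd
        · -- min is c : cone B
          exact Or.inl <| Or.inr ⟨a-c, b, 2*c, d-c, by linarith, hb, by linarith, by linarith,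
            by funext i; fin_cases i <;> simp [e1, d1, d3, d4, c1] <;> ring⟩
        · -- d ≤ c ≤ a : cone C
          exact Or.inr ⟨a-d, b, c-d, 2*d, by linarith, hb, by linarith, by linarith,
            by funext i; fin_cases i <;> simp [e1, d1, d3, d4, c1] <;> ring⟩
    · rintro ((⟨a, b, c, d, ha, hb, hc, hd, rfl⟩ | ⟨a, b, c, d, ha, hb, hc, hd, rfl⟩) |
        ⟨a, b, c, d, ha, hb, hc, hd, rfl⟩)
      · exact ⟨a/2, b, c + a/2, d + a/2, by linarith, hb, by linarith, by linarith,
          by funext i; fin_cases i <;> simp [e1, d1, d3, d4, c1] <;> ring⟩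
      · exact ⟨a + c/2, b, c/2, d + c/2, by linarith, hb, by linarith, by linarith,
          by funext i; fin_cases i <;> simp [e1, d1, d3, d4, c1] <;> ring⟩
      · exact ⟨a + d/2, b, c + d/2, d/2, by linarith, hb, by linarith, by linarith,
          by funext i; fin_cases i <;> simp [e1, d1, d3, d4, c1] <;> ring⟩
  all_goals
    rw [colMat, Matrix.det_transpose]
    simp [Matrix.det_succ_row_zero, Fin.sum_univ_succ, Fin.succAbove, e1, d1, d3, d4, c1]
    norm_num
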